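/- Let P and Q be smooth manifolds immersed in a topological space S such that P and Q are orbits of the family of all vector fields on S (i.e., both are invariant under every local flow: for every vector field X on S with local flow φₜ, φₜ maps P ∩ dom(φₜ) into P and Q ∩ dom(φₜ) into Q, and any two points of Q are joined by a piecewise-integral-curve path of such flows). If the closure of P meets Q, then Q is contained in the closure of P. -/
import Mathlib


/-- Frontier Condition, Theorem 8: Let `P`, `Q` be subsets of a
topological space `S`, both invariant under a family of local homeomorphisms
(local flows of vector fields, given by maps `h i : D i → E i` between open sets
with inverses `hinv i`), with any two points of `Q` joined by a finite chain of
these maps. If the closure of `P` meets `Q`, then `Q ⊆ closure P`. -/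
theorem stmt_17 {S : Type*} [TopologicalSpace S] {ι : Type*}
    (D E : ι → Set S) (h hinv : ι → S → S)
    (hDopen : ∀ i, IsOpen (D i)) (hEopen : ∀ i, IsOpen (E i))
    (hcont : ∀ i, ContinuousOn (h i) (D i))
    (hcontinv : ∀ i, ContinuousOn (hinv i) (E i))
    (hmaps : ∀ i, Set.MapsTo (h i) (D i) (E i))
    (hmapsinv : ∀ i, Set.MapsTo (hinv i) (E i) (D i))
    (hleft : ∀ i, ∀ x ∈ D i, hinv i (h i x) = x)
    (hright : ∀ i, ∀ y ∈ E i, h i (hinv i y) = y)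
    (P Q : Set S)
    (hP : ∀ i, h i '' (P ∩ D i) = P ∩ E i)
    (hQ : ∀ i, h i '' (Q ∩ D i) = Q ∩ E i)
    (hQconn : ∀ x ∈ Q, ∀ y ∈ Q,
      Relation.ReflTransGen (fun a b => ∃ i, a ∈ D i ∧ h i a = b) x y)
    (hmeet : (closure P ∩ Q).Nonempty) :
    Q ⊆ closure P := by
  obtain ⟨x0, hx0P, hx0Q⟩ := hmeet
  -- each map h i sends closure P ∩ D i into closure P
  have step : ∀ i, ∀ a ∈ D i, a ∈ closure P → h i a ∈ closure P := by
    intro i a haD haP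
    rw [mem_closure_iff]
    intro U hU hbU
    have hVopen : IsOpen (D i ∩ h i ⁻¹' U) :=
      (hcont i).isOpen_inter_preimage (hDopen i) hU
    have haV : a ∈ D i ∩ h i ⁻¹' U := ⟨haD, hbU⟩
    obtain ⟨p, hpV, hpP⟩ := (mem_closure_iff.mp haP) _ hVopen haV
    refine ⟨h i p, hpV.2, ?_⟩
    have : h i p ∈ P ∩ E i := by
      rw [← hP i]; exact ⟨p, ⟨hpP, hpV.1⟩, rfl⟩
    exact this.1
  intro q hq
  have chain := hQconn x0 hx0Q q hq
  clear hq
  induction chain with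
  | refl => exact hx0P
  | tail _ hbc ih =>
      obtain ⟨i, haD, rfl⟩ := hbc
      exact step i _ haD ih
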